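/- arXiv:2304.04480 — 2 statements merged into one kernel-verified Lean document; each statement's English description precedes it below -/
import Mathlib

section
/- Let H be a simple graph on k vertices and let n be a positive integer with C(n,k)·k! < 2^{C(k,2)}, where C(a,b) denotes the binomial coefficient. Then there exists a labelled graph on n vertices that contains no induced copy of H. -/
/-!
A graph `G` on `W` with an induced copy `φ : H ↪g G` is determined by `φ` together with the
edges of `G` not lying inside the image of `φ`, because inside that image its edges are those of
`φ H`. Encoding `G` this way shows that at most
`|W|.descFactorial |V| · 2 ^ (C(|W|, 2) - C(|V|, 2))` of the `2 ^ C(|W|, 2)` graphs on `W`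
contain an induced copy of `H`.
-/

open Finset

theorem Nat.descFactorial_mul_two_pow_sub_choose_two_lt {k n : ℕ}
    (h : n.choose k * k.factorial < 2 ^ k.choose 2) :
    n.descFactorial k * 2 ^ (n.choose 2 - k.choose 2) < 2 ^ n.choose 2 := by
  rw [Nat.descFactorial_eq_factorial_mul_choose, mul_comm k.factorial]
  rcases le_or_gt k n with hkn | hnk
  · calc n.choose k * k.factorial * 2 ^ (n.choose 2 - k.choose 2)
        < 2 ^ k.choose 2 * 2 ^ (n.choose 2 - k.choose 2) := by gcongr
      _ = 2 ^ n.choose 2 := by rw [← pow_add, Nat.add_sub_cancel' (Nat.choose_le_choose 2 hkn)]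
  · simp [Nat.choose_eq_zero_of_lt hnk]

namespace SimpleGraph

variable {V W : Type*}

theorem card_simpleGraph [Fintype W] [DecidableEq W] :
    Fintype.card (SimpleGraph W) = 2 ^ (Fintype.card W).choose 2 := by
  classical
  rw [← card_edgeFinset_top_eq_card_choose_two, ← card_powerset, ← card_univ]
  refine card_nbij (fun G => G.edgeFinset) (fun G _ => ?_) (fun G _ G' _ h => ?_) fun s hs => ?_
  · exact mem_powerset.2 (edgeFinset_subset_edgeFinset.2 le_top)
  · exact edgeFinset_inj.1 h
  · refine ⟨fromEdgeSet s, mem_coe.2 (mem_univ _), ?_⟩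
    rw [mem_coe, mem_powerset, edgeFinset_top] at hs
    simp only [← coe_inj, coe_edgeFinset, edgeSet_fromEdgeSet, sdiff_eq_left]
    exact Set.subset_compl_iff_disjoint_right.1 (Set.subset_toFinset.1 hs)

theorem Embedding.inf_map_top {H : SimpleGraph V} {G : SimpleGraph W} (φ : H ↪g G) :
    G ⊓ (⊤ : SimpleGraph V).map φ.toEmbedding = H.map φ.toEmbedding := by
  ext a b
  simp only [inf_adj, map_adj, top_adj]
  constructor
  · rintro ⟨hab, u, v, -, rfl, rfl⟩
    exact ⟨u, v, φ.map_adj_iff.1 hab, rfl, rfl⟩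
  · rintro ⟨u, v, huv, rfl, rfl⟩
    exact ⟨φ.map_adj_iff.2 huv, u, v, huv.ne, rfl, rfl⟩

theorem Embedding.eq_of_sdiff_map_top_eq {H : SimpleGraph V} {G G' : SimpleGraph W}
    (φ : H ↪g G) (ψ : H ↪g G') (hφψ : φ.toEmbedding = ψ.toEmbedding)
    (h : G \ (⊤ : SimpleGraph V).map φ.toEmbedding = G' \ (⊤ : SimpleGraph V).map ψ.toEmbedding) :
    G = G' := by
  rw [← sup_inf_sdiff G, ← sup_inf_sdiff G', φ.inf_map_top, ψ.inf_map_top, h, hφψ]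

theorem card_isIndContained_le [Fintype V] [Fintype W] [DecidableEq W] (H : SimpleGraph V) :
    Nat.card {G : SimpleGraph W // H ⊴ G} ≤
      (Fintype.card W).descFactorial (Fintype.card V) *
        2 ^ ((Fintype.card W).choose 2 - (Fintype.card V).choose 2) := by
  classical
  let outside : (V ↪ W) → Finset (Sym2 W) := fun f =>
    (⊤ : SimpleGraph W).edgeFinset \ ((⊤ : SimpleGraph V).map f).edgeFinset
  have card_outside (f : V ↪ W) :
      #(outside f) = (Fintype.card W).choose 2 - (Fintype.card V).choose 2 := by
    rw [card_sdiff_of_subset (edgeFinset_subset_edgeFinset.2 le_top), card_edgeFinset_map,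
      card_edgeFinset_top_eq_card_choose_two, card_edgeFinset_top_eq_card_choose_two]
  let encode (G : {G : SimpleGraph W // H ⊴ G}) : Σ _ : V ↪ W, Finset (Sym2 W) :=
    ⟨G.2.some.toEmbedding, (G.1 \ (⊤ : SimpleGraph V).map G.2.some.toEmbedding).edgeFinset⟩
  have encode_mem (G : {G : SimpleGraph W // H ⊴ G}) :
      encode G ∈ univ.sigma fun f => (outside f).powerset := by
    simp only [mem_sigma, mem_univ, mem_powerset, true_and, encode, outside, edgeFinset_sdiff]
    exact sdiff_subset_sdiff (edgeFinset_subset_edgeFinset.2 le_top) le_rfl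
  have encode_injective : Function.Injective encode := by
    intro G G' h
    obtain ⟨hf, hE⟩ := Sigma.mk.inj_iff.1 h
    exact Subtype.ext (Embedding.eq_of_sdiff_map_top_eq _ _ hf (edgeFinset_inj.1 (eq_of_heq hE)))
  calc Nat.card {G : SimpleGraph W // H ⊴ G}
      = #(univ : Finset {G : SimpleGraph W // H ⊴ G}) := by
        rw [Nat.card_eq_fintype_card, card_univ]
    _ ≤ #(univ.sigma fun f => (outside f).powerset) :=
        card_le_card_of_injOn encode (fun G _ => encode_mem G) encode_injective.injOn
    _ = _ := by
        simp only [card_sigma, card_powerset, card_outside, sum_const, card_univ,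
          Fintype.card_embedding_eq, smul_eq_mul]

theorem exists_not_isIndContained_of_lt [Fintype V] [Fintype W] [DecidableEq W]
    (H : SimpleGraph V)
    (h : (Fintype.card W).descFactorial (Fintype.card V) *
        2 ^ ((Fintype.card W).choose 2 - (Fintype.card V).choose 2) <
      2 ^ (Fintype.card W).choose 2) :
    ∃ G : SimpleGraph W, ¬ H ⊴ G := by
  by_contra! hall
  have card_eq : Nat.card {G : SimpleGraph W // H ⊴ G} = 2 ^ (Fintype.card W).choose 2 := by
    rw [Nat.card_congr (Equiv.subtypeUnivEquiv hall), Nat.card_eq_fintype_card, card_simpleGraph]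
  exact h.not_ge (card_eq ▸ card_isIndContained_le H)

end SimpleGraph

theorem exists_graph_without_induced_copy_of_count_general {V : Type*} [Fintype V]
    (H : SimpleGraph V) (k n : ℕ) (hk : Fintype.card V = k)
    (hlt : n.choose k * k.factorial < 2 ^ k.choose 2) :
    ∃ G : SimpleGraph (Fin n), IsEmpty (H ↪g G) := by
  obtain ⟨G, hG⟩ := H.exists_not_isIndContained_of_lt (W := Fin n) (by
    rw [Fintype.card_fin, hk]
    exact Nat.descFactorial_mul_two_pow_sub_choose_two_lt hlt)
  exact ⟨G, not_nonempty_iff.1 hG⟩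

/-- Let `H` be a simple graph on `k` vertices and let `n` be a positive integer with
`C(n,k) · k! < 2^(C(k,2))`.  Then there exists a labelled graph on `n` vertices
(a simple graph on `Fin n`) containing no induced copy of `H`, i.e. admitting no graph
embedding of `H`. -/
theorem exists_graph_without_induced_copy_of_count {V : Type*} [Fintype V]
    (H : SimpleGraph V) (k n : ℕ) (hk : Fintype.card V = k) (hn : 0 < n)
    (hlt : n.choose k * k.factorial < 2 ^ k.choose 2) :
    ∃ G : SimpleGraph (Fin n), IsEmpty (H ↪g G) :=
  exists_graph_without_induced_copy_of_count_general H k n hk hlt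
end

section
/- For every real constant c > 0 there exists an integer L such that for every l ≥ L and every integer N with 2 ≤ N ≤ n_l^c, where n_l is the number of vertices of the Sierpinski graph S_l, the following holds: N times the number of labelled graphs G on N vertices for which some 2-coloring of the edges of G contains an induced monochromatic copy of S_l is at most 2^{C(N,2)}; equivalently, at least a (1 − 1/N) fraction of all labelled graphs on N vertices admit no 2-edge-coloring containing an induced monochromatic copy of S_l. -/
/-!
The Sierpinski graph `S_l` (`l ≥ 1`) is defined recursively: `S_1` is a triangle; for
`l > 1`, `S_l` consists of three copies of `S_{l-1}` glued at corners.  We realize this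
concretely in the integer grid: the level-`l` graph has corners `(0,0)`, `(2^(l-1),0)`,
`(0,2^(l-1))`, and is the union of three translated copies of the level-`(l-1)` graph;
the gluing identifications happen automatically because the shared corner points coincide.
-/

/-- `sierpAdj j` is the adjacency relation of the Sierpinski graph of level `j + 1`,
drawn in the integer grid with corners `(0,0)`, `(2^j, 0)`, `(0, 2^j)`. -/
def sierpAdj : ℕ → (ℤ × ℤ) → (ℤ × ℤ) → Prop
  | 0 => fun p q =>
      p ≠ q ∧ p ∈ ({(0, 0), (1, 0), (0, 1)} : Set (ℤ × ℤ)) ∧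
        q ∈ ({(0, 0), (1, 0), (0, 1)} : Set (ℤ × ℤ))
  | (j + 1) => fun p q =>
      sierpAdj j p q ∨ sierpAdj j (p - (2 ^ j, 0)) (q - (2 ^ j, 0)) ∨
        sierpAdj j (p - (0, 2 ^ j)) (q - (0, 2 ^ j))

/-- The Sierpinski graph `S_l` (meaningful for `l ≥ 1`), as a simple graph on `ℤ × ℤ`;
its vertex set is its support (the set of non-isolated points). -/
def Sierpinski (l : ℕ) : SimpleGraph (ℤ × ℤ) := SimpleGraph.fromRel (sierpAdj (l - 1))

/-- The three corner vertices of `S_l`. -/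
def sierpCorners (l : ℕ) : Set (ℤ × ℤ) := {(0, 0), (2 ^ (l - 1), 0), (0, 2 ^ (l - 1))}


/-- The Sierpinski graph `S_l` as a graph on its own (finite) vertex set, namely the
subgraph of `Sierpinski l` induced on its support. -/
def SierpinskiInduced (l : ℕ) : SimpleGraph ((Sierpinski l).support) :=
  (Sierpinski l).induce (Sierpinski l).support

/-- A 2-coloring `c` of the edges of `G` contains an induced monochromatic copy of `H`
if there is a graph embedding `f : H ↪g G` and a color `b` such that every edge
`f u f v` with `u v` an edge of `H` receives color `b`. -/
def ColoringContainsInducedMonoCopy {V W : Type*} (H : SimpleGraph V)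
    (G : SimpleGraph W) (c : Sym2 W → Bool) : Prop :=
  ∃ (f : H ↪g G) (b : Bool), ∀ u v : V, H.Adj u v → c s(f u, f v) = b

/-!
Neither the colouring nor the structure of `S_l` matters beyond its size `n`. A graph on
`N` vertices in which an `n`-vertex graph `H` embeds as an induced subgraph via an injection
`f` is determined by its edges outside the image of `f`, so a union bound over the at most
`N ^ n` injections shows that at most `N ^ n * 2 ^ (C(N,2) - C(n,2))` graphs contain an
induced copy of `H`. The bottom row of `S_l` already has `2 ^ (l - 1) + 1` vertices, so `n`
is large when `l` is, and then `N ≤ n ^ c` gives `N ^ (n + 1) ≤ 2 ^ C(n,2)` because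
`c * log n ≤ n / 16` as soon as `n ≥ (32 c) ^ 2`.
-/

open Finset

namespace SimpleGraph

variable {V W : Type*}

lemma inf_map_top_eq_map_of_comap_eq {G : SimpleGraph W} {H : SimpleGraph V} (f : V ↪ W)
    (hG : G.comap f = H) : G ⊓ (⊤ : SimpleGraph V).map f = H.map f := by
  subst hG
  ext a b
  simp only [inf_adj, map_adj, top_adj, comap_adj]
  constructor
  · rintro ⟨hab, u, v, huv, rfl, rfl⟩
    exact ⟨u, v, hab, rfl, rfl⟩
  · rintro ⟨u, v, huv, rfl, rfl⟩
    exact ⟨huv, u, v, ne_of_apply_ne f huv.ne, rfl, rfl⟩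

variable [Fintype W]

lemma ncard_Iic_le_two_pow (K : SimpleGraph W) [Fintype K.edgeSet] :
    (Set.Iic K).ncard ≤ 2 ^ #K.edgeFinset := by
  classical
  calc (Set.Iic K).ncard
      ≤ (K.edgeFinset.powerset : Set (Finset (Sym2 W))).ncard :=
        Set.ncard_le_ncard_of_injOn (fun G => G.edgeFinset)
          (fun G hG => by simpa using edgeFinset_mono hG)
          (fun G _ G' _ h => edgeFinset_inj.mp h)
    _ = 2 ^ #K.edgeFinset := by rw [Set.ncard_coe_finset, Finset.card_powerset]

variable [Fintype V]

lemma ncard_setOf_comap_eq_mul_le (f : V ↪ W) (H : SimpleGraph V) :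
    {G : SimpleGraph W | G.comap f = H}.ncard * 2 ^ (Fintype.card V).choose 2 ≤
      2 ^ (Fintype.card W).choose 2 := by
  classical
  set M := (⊤ : SimpleGraph V).map f
  have hM : #M.edgeFinset = (Fintype.card V).choose 2 := by
    rw [card_edgeFinset_map, card_edgeFinset_top_eq_card_choose_two]
  have hfree : #(⊤ \ M).edgeFinset + (Fintype.card V).choose 2 =
      (Fintype.card W).choose 2 := by
    rw [edgeFinset_sdiff, Finset.card_sdiff_of_subset (edgeFinset_mono le_top), hM,
      card_edgeFinset_top_eq_card_choose_two]
    exact Nat.sub_add_cancel (hM ▸ card_edgeFinset_le_card_choose_two)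
  have hle : {G : SimpleGraph W | G.comap f = H}.ncard ≤ 2 ^ #(⊤ \ M).edgeFinset :=
    calc {G : SimpleGraph W | G.comap f = H}.ncard
        ≤ (Set.Iic (⊤ \ M)).ncard :=
          Set.ncard_le_ncard_of_injOn (· \ M)
            (fun G _ => show G \ M ≤ ⊤ \ M from sdiff_le_sdiff_right le_top)
            (fun G hG G' hG' h => by
              rw [← sup_inf_sdiff G M, ← sup_inf_sdiff G' M,
                inf_map_top_eq_map_of_comap_eq f hG, inf_map_top_eq_map_of_comap_eq f hG']
              exact congrArg _ h)
      _ ≤ 2 ^ #(⊤ \ M).edgeFinset := ncard_Iic_le_two_pow _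
  calc _ ≤ 2 ^ #(⊤ \ M).edgeFinset * 2 ^ (Fintype.card V).choose 2 :=
        Nat.mul_le_mul_right _ hle
    _ = 2 ^ (Fintype.card W).choose 2 := by rw [← pow_add, hfree]

lemma ncard_setOf_nonempty_embedding_mul_le (H : SimpleGraph V) :
    {G : SimpleGraph W | Nonempty (H ↪g G)}.ncard * 2 ^ (Fintype.card V).choose 2 ≤
      Fintype.card W ^ Fintype.card V * 2 ^ (Fintype.card W).choose 2 := by
  classical
  have hcover : {G : SimpleGraph W | Nonempty (H ↪g G)} ⊆
      ⋃ f : V ↪ W, {G : SimpleGraph W | G.comap f = H} := by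
    rintro G ⟨e⟩
    exact Set.mem_iUnion.mpr ⟨e.toEmbedding, by ext u v; exact e.map_adj_iff⟩
  calc _ ≤ (∑ f : V ↪ W, {G : SimpleGraph W | G.comap f = H}.ncard) *
        2 ^ (Fintype.card V).choose 2 :=
        Nat.mul_le_mul_right _ ((Set.ncard_le_ncard hcover).trans
          (Set.ncard_iUnion_le_of_fintype _))
    _ ≤ ∑ _f : V ↪ W, 2 ^ (Fintype.card W).choose 2 := by
        rw [Finset.sum_mul]
        exact Finset.sum_le_sum fun f _ => ncard_setOf_comap_eq_mul_le f H
    _ ≤ Fintype.card W ^ Fintype.card V * 2 ^ (Fintype.card W).choose 2 := by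
        rw [Finset.sum_const, Finset.card_univ, smul_eq_mul, Fintype.card_embedding_eq]
        exact Nat.mul_le_mul_right _ (Nat.descFactorial_le_pow _ _)

end SimpleGraph

lemma sierpAdj_mem_Icc {j : ℕ} {p q : ℤ × ℤ} (h : sierpAdj j p q) :
    p ∈ Set.Icc (0, 0) (2 ^ j, 2 ^ j) ∧ q ∈ Set.Icc (0, 0) (2 ^ j, 2 ^ j) := by
  induction j generalizing p q with
  | zero =>
    obtain ⟨-, hp, hq⟩ := h
    simp only [Set.mem_insert_iff, Set.mem_singleton_iff] at hp hq
    rcases hp with rfl | rfl | rfl <;> rcases hq with rfl | rfl | rfl <;> decide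
  | succ j ih =>
    have hpow : (2 : ℤ) ^ (j + 1) = 2 ^ j + 2 ^ j := by ring
    rcases h with h | h | h <;>
    · obtain ⟨⟨⟨hp1, hp2⟩, hp3, hp4⟩, ⟨⟨hq1, hq2⟩, hq3, hq4⟩⟩ := ih h
      simp only [Prod.fst_sub, Prod.snd_sub, Set.mem_Icc, Prod.le_def] at *
      omega

lemma Sierpinski.support_finite (l : ℕ) : (Sierpinski l).support.Finite := by
  refine (Set.finite_Icc ((0 : ℤ), (0 : ℤ)) (2 ^ (l - 1), 2 ^ (l - 1))).subset ?_
  rintro p ⟨q, -, h | h⟩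
  exacts [(sierpAdj_mem_Icc h).1, (sierpAdj_mem_Icc h).2]

lemma sierpAdj_bottom_row {j : ℕ} {i : ℤ} (h0 : 0 ≤ i) (hi : i < 2 ^ j) :
    sierpAdj j (i, 0) (i + 1, 0) := by
  induction j generalizing i with
  | zero =>
    obtain rfl : i = 0 := by omega
    exact ⟨by decide, by simp, by simp⟩
  | succ j ih =>
    rcases lt_or_ge i (2 ^ j) with h | h
    · exact Or.inl (ih h0 h)
    · refine Or.inr (Or.inl ?_)
      have hpow : (2 : ℤ) ^ (j + 1) = 2 ^ j + 2 ^ j := by ring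
      have := ih (i := i - 2 ^ j) (by omega) (by omega)
      simpa [Prod.ext_iff, sub_add_eq_add_sub] using this

lemma Sierpinski.two_pow_pred_add_one_le_ncard_support (l : ℕ) :
    2 ^ (l - 1) + 1 ≤ (Sierpinski l).support.ncard := by
  classical
  set row := (Finset.range (2 ^ (l - 1) + 1)).image fun i : ℕ => ((i : ℤ), (0 : ℤ))
  have hrow : (row : Set (ℤ × ℤ)) ⊆ (Sierpinski l).support := by
    intro p hp
    simp only [row, coe_image, Set.mem_image, mem_coe, mem_range] at hp
    obtain ⟨i, hi, rfl⟩ := hp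
    have hi' : (i : ℤ) ≤ 2 ^ (l - 1) := by exact_mod_cast Nat.lt_succ_iff.mp hi
    rcases lt_or_ge (i : ℤ) (2 ^ (l - 1)) with h | h
    · exact ⟨(i + 1, 0), by simp, Or.inl (sierpAdj_bottom_row (by omega) h)⟩
    · have hpos : (0 : ℤ) < 2 ^ (l - 1) := by positivity
      refine ⟨(i - 1, 0), by simp; omega, Or.inr ?_⟩
      simpa using sierpAdj_bottom_row (j := l - 1) (i := i - 1) (by omega) (by omega)
  calc 2 ^ (l - 1) + 1 = #row := by
        rw [card_image_of_injective _ fun a b h => by simpa using h, card_range]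
    _ = (row : Set (ℤ × ℤ)).ncard := (Set.ncard_coe_finset _).symm
    _ ≤ (Sierpinski l).support.ncard := Set.ncard_le_ncard hrow (Sierpinski.support_finite l)

section

open Real

lemma mul_log_le_div_sixteen {c x : ℝ} (hx : 1 ≤ x) (hcx : (32 * c) ^ 2 ≤ x) :
    c * log x ≤ x / 16 := by
  have hc : c ≤ √x / 32 := by linarith [le_sqrt_of_sq_le hcx]
  have hlog : log x ≤ 2 * √x := by
    have := log_le_sub_one_of_pos (sqrt_pos.mpr (by linarith : 0 < x))
    rw [log_sqrt (by linarith)] at this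
    linarith
  calc c * log x ≤ √x / 32 * log x := mul_le_mul_of_nonneg_right hc (log_nonneg hx)
    _ ≤ √x / 32 * (2 * √x) := mul_le_mul_of_nonneg_left hlog (by positivity)
    _ = x / 16 := by
      rw [show √x / 32 * (2 * √x) = √x * √x / 16 by ring, mul_self_sqrt (by linarith)]

lemma pow_succ_le_two_pow_choose_two {c : ℝ} {n N : ℕ} (hn : 2 ≤ n) (hcn : (32 * c) ^ 2 ≤ n)
    (hN : 0 < N) (hNn : (N : ℝ) ≤ (n : ℝ) ^ c) : N ^ (n + 1) ≤ 2 ^ n.choose 2 := by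
  have hn' : (2 : ℝ) ≤ n := by exact_mod_cast hn
  have hlogN : log N ≤ n / 16 :=
    calc log N ≤ log ((n : ℝ) ^ c) := log_le_log (by positivity) hNn
      _ = c * log n := log_rpow (by positivity) c
      _ ≤ n / 16 := mul_log_le_div_sixteen (by linarith) hcn
  have hlog : log ((N : ℝ) ^ (n + 1)) ≤ log ((2 : ℝ) ^ n.choose 2) := by
    rw [log_pow, log_pow, Nat.cast_choose_two]
    push_cast
    calc ((n : ℝ) + 1) * log N ≤ (n + 1) * (n / 16) :=
          mul_le_mul_of_nonneg_left hlogN (by positivity)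
      _ ≤ n * (n - 1) / 2 * (1 / 2) := by nlinarith
      _ ≤ n * (n - 1) / 2 * log 2 :=
          mul_le_mul_of_nonneg_left (by linarith [log_two_gt_d9]) (by nlinarith)
  exact_mod_cast (log_le_log_iff (by positivity) (by positivity)).mp hlog

end

theorem almost_all_graphs_without_mono_sierpinski_general (c : ℝ) :
    ∃ L : ℕ, 1 ≤ L ∧ ∀ l : ℕ, L ≤ l → ∀ N : ℕ, 2 ≤ N →
      (N : ℝ) ≤ ((Sierpinski l).support.ncard : ℝ) ^ c →
      N * {G : SimpleGraph (Fin N) | ∃ coloring : Sym2 (Fin N) → Bool,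
            ColoringContainsInducedMonoCopy (SierpinskiInduced l) G coloring}.ncard ≤
        2 ^ N.choose 2 := by
  refine ⟨⌈(32 * c) ^ 2⌉₊ + 2, by omega, fun l hl N hN hNn => ?_⟩
  have := (Sierpinski.support_finite l).fintype
  set n := (Sierpinski l).support.ncard
  have hcard : Fintype.card (Sierpinski l).support = n := by
    rw [← Nat.card_eq_fintype_card, Nat.card_coe_set_eq]
  have hln : l < n := by
    have := Sierpinski.two_pow_pred_add_one_le_ncard_support l
    have := Nat.lt_two_pow_self (n := l - 1)
    omega
  have hcn : (32 * c) ^ 2 ≤ n :=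
    (Nat.le_ceil _).trans (by exact_mod_cast (show ⌈(32 * c) ^ 2⌉₊ ≤ n by omega))
  have hcopies := SimpleGraph.ncard_setOf_nonempty_embedding_mul_le
    (W := Fin N) (SierpinskiInduced l)
  rw [hcard, Fintype.card_fin] at hcopies
  have hmono : {G : SimpleGraph (Fin N) | ∃ coloring : Sym2 (Fin N) → Bool,
      ColoringContainsInducedMonoCopy (SierpinskiInduced l) G coloring}.ncard ≤
      {G : SimpleGraph (Fin N) | Nonempty (SierpinskiInduced l ↪g G)}.ncard :=
    Set.ncard_le_ncard (fun G ⟨_, f, _⟩ => ⟨f⟩)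
  have hpow := pow_succ_le_two_pow_choose_two (by omega) hcn (by omega) hNn
  refine Nat.le_of_mul_le_mul_right ?_ (pow_pos two_pos (n.choose 2))
  calc _ ≤ N * ({G : SimpleGraph (Fin N) | Nonempty (SierpinskiInduced l ↪g G)}.ncard *
        2 ^ n.choose 2) := by rw [mul_assoc]; gcongr
    _ ≤ N ^ (n + 1) * 2 ^ N.choose 2 := by rw [pow_succ', mul_assoc]; gcongr
    _ ≤ 2 ^ N.choose 2 * 2 ^ n.choose 2 := by rw [mul_comm]; gcongr

/-- For every real constant `c > 0` there is an integer `L` such that for every `l ≥ L`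
and every integer `N` with `2 ≤ N ≤ n_l ^ c`, where `n_l` is the number of vertices of
`S_l`: `N` times the number of labelled graphs `G` on `N` vertices for which some
2-coloring of the edges contains an induced monochromatic copy of `S_l` is at most
`2^(C(N,2))` — equivalently, at least a `(1 − 1/N)` fraction of all `2^(C(N,2))`
labelled graphs on `N` vertices admit no 2-edge-coloring containing an induced
monochromatic copy of `S_l`. -/
theorem almost_all_graphs_without_mono_sierpinski (c : ℝ) (hc : 0 < c) :
    ∃ L : ℕ, 1 ≤ L ∧ ∀ l : ℕ, L ≤ l → ∀ N : ℕ, 2 ≤ N →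
      (N : ℝ) ≤ ((Sierpinski l).support.ncard : ℝ) ^ c →
      N * {G : SimpleGraph (Fin N) | ∃ coloring : Sym2 (Fin N) → Bool,
            ColoringContainsInducedMonoCopy (SierpinskiInduced l) G coloring}.ncard ≤
        2 ^ N.choose 2 :=
  almost_all_graphs_without_mono_sierpinski_general c
end
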